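/- Let 1 ≤ p₁, p₂ < ∞, let 0 < r ≤ 1, and let σ : 𝕋ⁿ × ℤⁿ → ℂ be such that σ(·,k) ∈ L^{p₂}(μ) for every k ∈ ℤⁿ and ∑_{k∈ℤⁿ} ‖σ(·,k)‖_{L^{p₂}(μ)}^r < ∞. Then the operator A = Op(σ) with symbol σ is a well-defined bounded linear operator from L^{p₁}(μ) to L^{p₂}(μ) and is r-nuclear. -/

import Mathlib

open MeasureTheory ENNReal NNReal Real

noncomputable section

/-- For `0 < r ≤ 1`, a bounded linear operator `T : E → F` between complex Banach spaces is
`r`-nuclear if there are sequences `(x'_m)` of continuous functionals on `E` and `(y_m)` in `F`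
with `T v = ∑ₘ x'_m(v) • y_m` for all `v` and `∑ₘ ‖x'_m‖^r ‖y_m‖^r < ∞`. -/
def IsRNuclear {E F : Type*} [NormedAddCommGroup E] [NormedSpace ℂ E]
    [NormedAddCommGroup F] [NormedSpace ℂ F] (r : ℝ) (T : E →L[ℂ] F) : Prop :=
  ∃ (x' : ℕ → (E →L[ℂ] ℂ)) (y : ℕ → F),
    (∀ v : E, HasSum (fun m => x' m v • y m) (T v)) ∧
    Summable (fun m => ‖x' m‖ ^ r * ‖y m‖ ^ r)

/-- The `n`-torus `𝕋ⁿ = (ℝ/ℤ)ⁿ`; its `volume` measure is the product of the normalized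
Haar measures of the circle factors, a probability measure. -/
abbrev Torus (n : ℕ) := Fin n → AddCircle (1 : ℝ)

/-- The character `e_k(x) = ∏ i, exp(2πi k_i x_i)` on the `n`-torus. -/
noncomputable def eK {n : ℕ} (k : Fin n → ℤ) (x : Torus n) : ℂ :=
  ∏ i, (fourier (k i) : C(AddCircle (1 : ℝ), ℂ)) (x i)

/-- The `k`-th Fourier coefficient `f̂(k) = ∫ f conj(e_k) dμ` of `f : 𝕋ⁿ → ℂ`. -/
noncomputable def fourierCoeffT {n : ℕ} (f : Torus n → ℂ) (k : Fin n → ℤ) : ℂ :=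
  ∫ x, f x * (starRingEnd ℂ) (eK k x)

/-- `A` is the operator `Op(σ)` with symbol `σ`: `A f = ∑_k f̂(k) • (σ(·,k) e_k)`,
the series converging in `L^{p₂}(μ)`. -/
def IsOp {n : ℕ} {p₁ p₂ : ℝ≥0∞} [Fact (1 ≤ p₁)] [Fact (1 ≤ p₂)]
    (σ : Torus n → (Fin n → ℤ) → ℂ)
    (A : Lp ℂ p₁ (volume : Measure (Torus n)) →L[ℂ] Lp ℂ p₂ (volume : Measure (Torus n))) :
    Prop :=
  ∃ F : (Fin n → ℤ) → Lp ℂ p₂ (volume : Measure (Torus n)),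
    (∀ k, ⇑(F k) =ᵐ[volume] fun x => σ x k * eK k x) ∧
    ∀ f : Lp ℂ p₁ (volume : Measure (Torus n)),
      HasSum (fun k => fourierCoeffT (⇑f) k • F k) (A f)

/-!
The `k`-th Fourier coefficient is a functional of norm at most `1` on `L^{p₁}(μ)`, since `μ` is a
probability measure, and `σ(·,k) e_k` has the same `L^{p₂}` norm as `σ(·,k)`. So `Op(σ)` is the
sum over `k` of the rank-one operators `f ↦ f̂(k) σ(·,k) e_k`, whose norms are `ℓ^r`-summable,
hence `ℓ^1`-summable as `r ≤ 1`: the series converges in operator norm, and reindexing `ℤⁿ` by `ℕ`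
(with zero terms off the image) turns it into an `r`-nuclear decomposition of any operator with
symbol `σ`.
-/

theorem summable_norm_of_summable_norm_rpow {ι E : Type*} [NormedAddCommGroup E] {y : ι → E}
    {r : ℝ} (hr0 : 0 < r) (hr1 : r ≤ 1) (h : Summable fun i => ‖y i‖ ^ r) :
    Summable fun i => ‖y i‖ := by
  have hr : (ENNReal.ofReal r).toReal = r := ENNReal.toReal_ofReal hr0.le
  have hmem : Memℓp y (ENNReal.ofReal r) := memℓp_gen (by rwa [hr])
  have hmem1 : Memℓp y 1 := hmem.of_exponent_ge (ENNReal.ofReal_le_one.mpr hr1)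
  simpa using (memℓp_gen_iff (by simp)).mp hmem1

theorem exists_hasSum_smul_of_summable_norm_mul {𝕜 ι E F : Type*} [NontriviallyNormedField 𝕜]
    [NormedAddCommGroup E] [NormedSpace 𝕜 E] [NormedAddCommGroup F] [NormedSpace 𝕜 F]
    [CompleteSpace F] (φ : ι → StrongDual 𝕜 E) (y : ι → F)
    (h : Summable fun i => ‖φ i‖ * ‖y i‖) :
    ∃ T : E →L[𝕜] F, ∀ v, HasSum (fun i => φ i v • y i) (T v) := by
  have hs : Summable fun i => (φ i).smulRight (y i) :=
    h.of_norm_bounded fun i => (ContinuousLinearMap.norm_smulRight_apply _ _).le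
  refine ⟨∑' i, (φ i).smulRight (y i), fun v => ?_⟩
  have := (ContinuousLinearMap.apply 𝕜 F v).hasSum hs.hasSum
  simpa only [ContinuousLinearMap.apply_apply, ContinuousLinearMap.smulRight_apply] using this

theorem isRNuclear_of_hasSum {ι E F : Type*} [Countable ι] [NormedAddCommGroup E]
    [NormedSpace ℂ E] [NormedAddCommGroup F] [NormedSpace ℂ F] {r : ℝ} (hr : r ≠ 0)
    {T : E →L[ℂ] F} (x' : ι → E →L[ℂ] ℂ) (y : ι → F)
    (hT : ∀ v, HasSum (fun i => x' i v • y i) (T v))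
    (hs : Summable fun i => ‖x' i‖ ^ r * ‖y i‖ ^ r) : IsRNuclear r T := by
  obtain ⟨e, he⟩ := Countable.exists_injective_nat ι
  have hx' : ∀ m ∉ Set.range e, Function.extend e x' 0 m = 0 :=
    fun m hm => Function.extend_apply' _ _ _ fun ⟨i, hi⟩ => hm ⟨i, hi⟩
  refine ⟨Function.extend e x' 0, Function.extend e y 0, fun v => ?_, ?_⟩
  · refine (he.hasSum_iff fun m hm => by simp [hx' m hm]).mp ?_
    simpa only [Function.comp_def, he.extend_apply] using hT v
  · refine (he.summable_iff fun m hm => by simp [hx' m hm, hr]).mp ?_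
    simpa only [Function.comp_def, he.extend_apply] using hs

section ProbabilitySpace

variable {α : Type*} [MeasurableSpace α] {μ : Measure α} [IsProbabilityMeasure μ] {p : ℝ≥0∞}
  {f g : α → ℂ}

theorem norm_integral_mul_le_eLpNorm (hp : 1 ≤ p) (hf : MemLp f p μ)
    (hg : ∀ᵐ x ∂μ, ‖g x‖ ≤ 1) : ‖∫ x, f x * g x ∂μ‖ ≤ (eLpNorm f p μ).toReal :=
  calc ‖∫ x, f x * g x ∂μ‖
      ≤ ∫ x, ‖f x * g x‖ ∂μ := norm_integral_le_integral_norm _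
    _ ≤ ∫ x, ‖f x‖ ∂μ := by
        refine integral_mono_of_nonneg (.of_forall fun x => norm_nonneg _)
          (hf.integrable hp).norm ?_
        filter_upwards [hg] with x hx
        rw [norm_mul]
        exact mul_le_of_le_one_right (norm_nonneg _) hx
    _ = (eLpNorm f 1 μ).toReal := by
        rw [integral_norm_eq_lintegral_enorm hf.1, eLpNorm_one_eq_lintegral_enorm]
    _ ≤ (eLpNorm f p μ).toReal :=
        ENNReal.toReal_mono hf.2.ne (eLpNorm_le_eLpNorm_of_exponent_le hp hf.1)

variable [Fact (1 ≤ p)]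

variable (μ p) in
def integralMulCLM (g : α → ℂ) (hgm : AEStronglyMeasurable g μ) (hg : ∀ᵐ x ∂μ, ‖g x‖ ≤ 1) :
    Lp ℂ p μ →L[ℂ] ℂ :=
  LinearMap.mkContinuous
    { toFun := fun f => ∫ x, f x * g x ∂μ
      map_add' := fun f₁ f₂ => by
        rw [← integral_add ((Lp.memLp f₁).integrable Fact.out |>.mul_bdd hgm hg)
          ((Lp.memLp f₂).integrable Fact.out |>.mul_bdd hgm hg)]
        exact integral_congr_ae <| (Lp.coeFn_add f₁ f₂).mono fun x hx => by
          simp only [hx, Pi.add_apply, add_mul]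
      map_smul' := fun c f => by
        rw [RingHom.id_apply, smul_eq_mul, ← integral_const_mul]
        exact integral_congr_ae <| (Lp.coeFn_smul c f).mono fun x hx => by simp [hx, mul_assoc] }
    1 fun f => by
      simpa [Lp.norm_def] using norm_integral_mul_le_eLpNorm Fact.out (Lp.memLp f) hg

theorem norm_integralMulCLM_le (hgm : AEStronglyMeasurable g μ) (hg : ∀ᵐ x ∂μ, ‖g x‖ ≤ 1) :
    ‖integralMulCLM μ p g hgm hg‖ ≤ 1 :=
  LinearMap.mkContinuous_norm_le _ zero_le_one _

end ProbabilitySpace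

instance : IsProbabilityMeasure (volume : Measure (AddCircle (1 : ℝ))) :=
  ⟨by simp [AddCircle.measure_univ]⟩

section Torus

variable {n : ℕ} {p : ℝ≥0∞}

theorem continuous_eK (k : Fin n → ℤ) : Continuous (eK k) :=
  continuous_finsetProd _ fun i _ => (fourier (k i)).continuous.comp (continuous_apply i)

theorem norm_eK (k : Fin n → ℤ) (x : Torus n) : ‖eK k x‖ = 1 := by
  simp [eK, fourier_apply, Circle.norm_coe]

variable (p) in
def fourierCoeffCLM [Fact (1 ≤ p)] (k : Fin n → ℤ) : Lp ℂ p (volume : Measure (Torus n)) →L[ℂ] ℂ :=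
  integralMulCLM volume p (fun x => starRingEnd ℂ (eK k x))
    (continuous_eK k).star.aestronglyMeasurable (.of_forall fun x => by simp [norm_eK])

theorem norm_fourierCoeffCLM_le [Fact (1 ≤ p)] (k : Fin n → ℤ) : ‖fourierCoeffCLM p k‖ ≤ 1 :=
  norm_integralMulCLM_le _ _

theorem eLpNorm_mul_eK (s : Torus n → ℂ) (k : Fin n → ℤ) :
    eLpNorm (fun x => s x * eK k x) p volume = eLpNorm s p volume :=
  eLpNorm_congr_norm_ae <| .of_forall fun x => by rw [norm_mul, norm_eK, mul_one]

theorem MeasureTheory.MemLp.mul_eK {s : Torus n → ℂ} (hs : MemLp s p volume) (k : Fin n → ℤ) :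
    MemLp (fun x => s x * eK k x) p volume :=
  ⟨hs.1.mul (continuous_eK k).aestronglyMeasurable, by rw [eLpNorm_mul_eK]; exact hs.2⟩

theorem MeasureTheory.Lp.norm_eq_eLpNorm_of_ae_eq_mul_eK [Fact (1 ≤ p)] {s : Torus n → ℂ}
    {k : Fin n → ℤ} {F : Lp ℂ p (volume : Measure (Torus n))}
    (hF : ⇑F =ᵐ[volume] fun x => s x * eK k x) :
    ‖F‖ = (eLpNorm s p volume).toReal := by
  rw [Lp.norm_def, eLpNorm_congr_ae hF, eLpNorm_mul_eK]

end Torus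

section Operator

variable {n : ℕ} {p₁ p₂ : ℝ≥0∞} [Fact (1 ≤ p₁)] [Fact (1 ≤ p₂)] {σ : Torus n → (Fin n → ℤ) → ℂ}
  {r : ℝ}

theorem exists_isOp (hr0 : 0 < r) (hr1 : r ≤ 1)
    (hσ : ∀ k, MemLp (fun x => σ x k) p₂ volume)
    (hsum : Summable fun k => (eLpNorm (fun x => σ x k) p₂ volume).toReal ^ r) :
    ∃ A : Lp ℂ p₁ (volume : Measure (Torus n)) →L[ℂ] Lp ℂ p₂ (volume : Measure (Torus n)),
      IsOp σ A := by
  let F k := ((hσ k).mul_eK k).toLp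
  have hF k : ⇑(F k) =ᵐ[volume] fun x => σ x k * eK k x := MemLp.coeFn_toLp _
  have hnormF k : ‖F k‖ = (eLpNorm (fun x => σ x k) p₂ volume).toReal :=
    Lp.norm_eq_eLpNorm_of_ae_eq_mul_eK (hF k)
  have hFsum : Summable fun k => ‖F k‖ :=
    summable_norm_of_summable_norm_rpow hr0 hr1 (by simpa only [hnormF] using hsum)
  obtain ⟨A, hA⟩ := exists_hasSum_smul_of_summable_norm_mul (fourierCoeffCLM p₁) F <|
    hFsum.of_nonneg_of_le (fun k => by positivity) fun k =>
      mul_le_of_le_one_left (norm_nonneg _) (norm_fourierCoeffCLM_le k)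
  exact ⟨A, F, hF, hA⟩

theorem IsOp.isRNuclear {A : Lp ℂ p₁ (volume : Measure (Torus n)) →L[ℂ] Lp ℂ p₂ volume}
    (hA : IsOp σ A) (hr0 : 0 < r)
    (hsum : Summable fun k => (eLpNorm (fun x => σ x k) p₂ volume).toReal ^ r) :
    IsRNuclear r A := by
  obtain ⟨F, hF, hAF⟩ := hA
  refine isRNuclear_of_hasSum hr0.ne' (fourierCoeffCLM p₁) F hAF ?_
  refine hsum.of_nonneg_of_le (fun k => by positivity) fun k => ?_
  rw [← Lp.norm_eq_eLpNorm_of_ae_eq_mul_eK (hF k)]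
  exact mul_le_of_le_one_left (by positivity)
    (Real.rpow_le_one (norm_nonneg _) (norm_fourierCoeffCLM_le k) hr0.le)

end Operator

theorem op_symbol_rNuclear_general (n : ℕ)
    (p₁ p₂ : ℝ≥0∞) [Fact (1 ≤ p₁)] [Fact (1 ≤ p₂)]
    (r : ℝ) (hr0 : 0 < r) (hr1 : r ≤ 1)
    (σ : Torus n → (Fin n → ℤ) → ℂ)
    (hσ : ∀ k, MemLp (fun x => σ x k) p₂ (volume : Measure (Torus n)))
    (hsum : Summable fun k : Fin n → ℤ =>
      (eLpNorm (fun x => σ x k) p₂ (volume : Measure (Torus n))).toReal ^ r) :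
    (∃ A : Lp ℂ p₁ (volume : Measure (Torus n)) →L[ℂ]
          Lp ℂ p₂ (volume : Measure (Torus n)), IsOp σ A) ∧
    ∀ A : Lp ℂ p₁ (volume : Measure (Torus n)) →L[ℂ]
          Lp ℂ p₂ (volume : Measure (Torus n)),
      IsOp σ A → IsRNuclear r A :=
  ⟨exists_isOp hr0 hr1 hσ hsum, fun _ hA => hA.isRNuclear hr0 hsum⟩

/-- **`r`-nuclearity from `ℓ^r`-summability of the symbol on the torus.** Let `1 ≤ p₁, p₂ < ∞`,
`0 < r ≤ 1` and `σ : 𝕋ⁿ × ℤⁿ → ℂ` with `σ(·,k) ∈ L^{p₂}(μ)` for all `k` and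
`∑_k ‖σ(·,k)‖_{L^{p₂}}^r < ∞`. Then `Op(σ)` is a well-defined bounded linear operator from
`L^{p₁}(μ)` to `L^{p₂}(μ)` and is `r`-nuclear. -/
theorem op_symbol_rNuclear (n : ℕ) (hn : 1 ≤ n)
    (p₁ p₂ : ℝ≥0∞) [Fact (1 ≤ p₁)] [Fact (1 ≤ p₂)] (hp₁ : p₁ ≠ ∞) (hp₂ : p₂ ≠ ∞)
    (r : ℝ) (hr0 : 0 < r) (hr1 : r ≤ 1)
    (σ : Torus n → (Fin n → ℤ) → ℂ)
    (hσ : ∀ k, MemLp (fun x => σ x k) p₂ (volume : Measure (Torus n)))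
    (hsum : Summable fun k : Fin n → ℤ =>
      (eLpNorm (fun x => σ x k) p₂ (volume : Measure (Torus n))).toReal ^ r) :
    (∃ A : Lp ℂ p₁ (volume : Measure (Torus n)) →L[ℂ]
          Lp ℂ p₂ (volume : Measure (Torus n)), IsOp σ A) ∧
    ∀ A : Lp ℂ p₁ (volume : Measure (Torus n)) →L[ℂ]
          Lp ℂ p₂ (volume : Measure (Torus n)),
      IsOp σ A → IsRNuclear r A :=
  op_symbol_rNuclear_general n p₁ p₂ r hr0 hr1 σ hσ hsum
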